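/- Let p > 0, let r ≥ 2, let (Ω_i, 𝓕_i, P_i), 1 ≤ i ≤ r, be probability spaces, let X_i : Ω_i → [0,∞) be measurable with P_r(X_r > 0) > 0, let E be a measurable space, let G : Ω_r × [0,∞) → E be measurable, and let B ⊆ E be measurable. Write S(ω) = ∑_{i=1}^{r−1} X_i(ω_i) and let Q = P_1 ⊗ ⋯ ⊗ P_r ⊗ μ_p on Ω_1 × ⋯ × Ω_r × [0,∞), with coordinate ℓ on the last factor. Then Q(G(ω_r, ℓ − S(ω)) ∈ B │ S(ω) < ℓ ≤ S(ω) + X_r(ω_r)) = (P_r ⊗ μ_p)(G(ω_r, ℓ_r) ∈ B │ ℓ_r ≤ X_r(ω_r)). -/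

import Mathlib

open MeasureTheory ProbabilityTheory NNReal ENNReal
open Set Real

/-!
On `{S < ℓ}` the exponential clock restarts at `S`: by memorylessness, for fixed `ω` the law of
`(ω_r, ℓ - S ω)` on `{S ω < ℓ}` is `e^{-p S ω} • (P_r ⊗ μ_p)`, so integrating over `ω` gives
`c • (P_r ⊗ μ_p)` with `c = E[e^{-p S}] ∈ (0, ∞)`. The conditioning event `{S < ℓ ≤ S + X_r}` and
the target event are preimages under the shift `(ω, ω_r, ℓ) ↦ (ω_r, ℓ - S ω)` (the former cut down
to `{S < ℓ}`), so `c` cancels from the conditional probability.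
-/

lemma lintegral_ofReal_exp_ne_zero {α : Type*} [MeasurableSpace α] {μ : Measure α} [NeZero μ]
    {f : α → ℝ} (hf : Measurable f) : ∫⁻ a, ENNReal.ofReal (exp (f a)) ∂μ ≠ 0 := by
  refine ((lintegral_pos_iff_support (by fun_prop)).2 ?_).ne'
  simp [Function.support, exp_pos, NeZero.ne μ]

lemma lintegral_ofReal_exp_ne_top {α : Type*} [MeasurableSpace α] {μ : Measure α}
    [IsFiniteMeasure μ] {f : α → ℝ} (hf : ∀ a, f a ≤ 0) :
    ∫⁻ a, ENNReal.ofReal (exp (f a)) ∂μ ≠ ∞ := by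
  refine ne_top_of_le_ne_top (measure_ne_top μ univ) ?_
  calc ∫⁻ a, ENNReal.ofReal (exp (f a)) ∂μ ≤ ∫⁻ _, 1 ∂μ :=
        lintegral_mono fun a => ENNReal.ofReal_le_one.2 (exp_le_one_iff.2 (hf a))
    _ = μ univ := lintegral_one

namespace ProbabilityTheory

variable {r : ℝ}

lemma expMeasure_eq_withDensity (r : ℝ) : expMeasure r = volume.withDensity (exponentialPDF r) :=
  rfl

instance (r : ℝ) : SFinite (expMeasure r) := by
  rw [expMeasure_eq_withDensity]
  infer_instance

lemma expMeasure_Iic_zero (r : ℝ) : expMeasure r (Iic 0) = 0 := by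
  rw [← Iio_union_right, measure_union_null_iff, expMeasure_eq_withDensity,
    withDensity_apply _ measurableSet_Iio, withDensity_apply _ (measurableSet_singleton 0)]
  exact ⟨lintegral_exponentialPDF_of_nonpos le_rfl,
    setLIntegral_measure_zero _ _ (measure_singleton 0)⟩

lemma expMeasure_restrict_Ioi_zero (r : ℝ) : (expMeasure r).restrict (Ioi 0) = expMeasure r :=
  Measure.restrict_eq_self_of_ae_mem <| ae_iff.2 <|
    measure_mono_null (fun x (hx : ¬ 0 < x) => not_lt.1 hx) (expMeasure_Iic_zero r)

/-- Memorylessness of the exponential distribution. -/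
lemma map_sub_restrict_Ioi_expMeasure {s : ℝ} (hs : 0 ≤ s) :
    ((expMeasure r).restrict (Ioi s)).map (· - s)
      = ENNReal.ofReal (exp (-(r * s))) • expMeasure r := by
  ext T hT
  have hpre : (· + s) ⁻¹' ((· - s) ⁻¹' T ∩ Ioi s) = T ∩ Ioi 0 := by
    ext t; simp
  have hmeas : MeasurableSet ((· - s) ⁻¹' T ∩ Ioi s) :=
    (measurable_sub_const s hT).inter measurableSet_Ioi
  have hpdf : Measurable (exponentialPDF r) := (measurable_exponentialPDFReal r).ennreal_ofReal
  rw [Measure.map_apply (measurable_sub_const s) hT, Measure.restrict_apply' measurableSet_Ioi,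
    Measure.smul_apply, smul_eq_mul]
  conv_rhs => rw [← expMeasure_restrict_Ioi_zero r, Measure.restrict_apply hT]
  rw [expMeasure_eq_withDensity, withDensity_apply _ hmeas,
    withDensity_apply _ (hT.inter measurableSet_Ioi),
    ← (measurePreserving_add_right volume s).setLIntegral_comp_preimage hmeas hpdf, hpre,
    ← lintegral_const_mul' _ _ ENNReal.ofReal_ne_top]
  refine setLIntegral_congr_fun (hT.inter measurableSet_Ioi) fun t ht => ?_
  rw [exponentialPDF_of_nonneg (add_pos_of_pos_of_nonneg ht.2 hs).le,
    exponentialPDF_of_nonneg (le_of_lt ht.2), ← ENNReal.ofReal_mul (exp_nonneg _),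
    show -(r * (t + s)) = -(r * s) + -(r * t) by ring, exp_add]
  congr 1
  ring

lemma map_prodMap_sub_restrict_prod_expMeasure {β : Type*} [MeasurableSpace β] (ν : Measure β)
    [SFinite ν] {s : ℝ} (hs : 0 ≤ s) :
    ((ν.prod (expMeasure r)).restrict (univ ×ˢ Ioi s)).map (Prod.map id (· - s))
      = ENNReal.ofReal (exp (-(r * s))) • ν.prod (expMeasure r) := by
  rw [← Measure.prod_restrict, Measure.restrict_univ, ← Measure.map_prod_map _ _ measurable_id
    (measurable_sub_const s), Measure.map_id, map_sub_restrict_Ioi_expMeasure hs,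
    Measure.prod_smul_right]

lemma map_overshoot_restrict_prod_expMeasure {α β : Type*} [MeasurableSpace α]
    [MeasurableSpace β] (μ : Measure α) [SFinite μ] (ν : Measure β) [SFinite ν]
    {S : α → ℝ} (hS : Measurable S) (hS_nonneg : ∀ a, 0 ≤ S a) :
    ((μ.prod (ν.prod (expMeasure r))).restrict {z | S z.1 < z.2.2}).map
        (fun z => (z.2.1, z.2.2 - S z.1))
      = (∫⁻ a, ENNReal.ofReal (exp (-(r * S a))) ∂μ) • ν.prod (expMeasure r) := by
  have hφ : Measurable fun z : α × β × ℝ => (z.2.1, z.2.2 - S z.1) := by fun_prop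
  have hU : MeasurableSet {z : α × β × ℝ | S z.1 < z.2.2} :=
    measurableSet_lt (by fun_prop) (by fun_prop)
  ext V hV
  have hslice (a : α) :
      Prod.mk a ⁻¹' ((fun z => (z.2.1, z.2.2 - S z.1)) ⁻¹' V ∩ {z | S z.1 < z.2.2})
        = Prod.map id (· - S a) ⁻¹' V ∩ univ ×ˢ Ioi (S a) := by
    ext ⟨b, t⟩
    simp [and_comm]
  have hshift (a : α) : Measurable (Prod.map id (· - S a) : β × ℝ → β × ℝ) :=
    measurable_id.prodMap (measurable_sub_const _)
  rw [Measure.map_apply hφ hV, Measure.restrict_apply (hφ hV),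
    Measure.prod_apply ((hφ hV).inter hU), Measure.smul_apply, smul_eq_mul,
    ← lintegral_mul_const _ (by fun_prop)]
  refine lintegral_congr fun a => ?_
  rw [hslice, ← Measure.restrict_apply (hshift a hV), ← Measure.map_apply (hshift a) hV,
    map_prodMap_sub_restrict_prod_expMeasure ν (hS_nonneg a), Measure.smul_apply, smul_eq_mul]

lemma cond_inter_preimage_eq_cond_of_map_restrict_eq_smul {Ω Ω' : Type*} [MeasurableSpace Ω]
    [MeasurableSpace Ω'] {μ : Measure Ω} {ν : Measure Ω'} {U : Set Ω} {φ : Ω → Ω'} {c : ℝ≥0∞}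
    (hU : MeasurableSet U) (hφ : Measurable φ) (hc₀ : c ≠ 0) (hc : c ≠ ∞)
    (h : (μ.restrict U).map φ = c • ν) {A D : Set Ω'} (hA : MeasurableSet A)
    (hD : MeasurableSet D) :
    μ[|U ∩ φ ⁻¹' A] (φ ⁻¹' D) = ν[|A] D := by
  have hμ : ∀ V, MeasurableSet V → μ (U ∩ φ ⁻¹' V) = c * ν V := by
    intro V hV
    rw [inter_comm, ← Measure.restrict_apply (hφ hV), ← Measure.map_apply hφ hV, h,
      Measure.smul_apply, smul_eq_mul]
  rw [cond_apply (hU.inter (hφ hA)), cond_apply hA, inter_assoc, ← preimage_inter, hμ A hA,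
    hμ _ (hA.inter hD), ENNReal.mul_inv (Or.inl hc₀) (Or.inl hc), mul_mul_mul_comm,
    ENNReal.inv_mul_cancel hc₀ hc, one_mul]

end ProbabilityTheory

theorem cond_rebirth_exponential_marginal_general
    (p : ℝ) (hp : 0 < p)
    (r : ℕ)
    (Ω : Fin (r - 1) → Type*) [∀ i, MeasurableSpace (Ω i)]
    (P : ∀ i, Measure (Ω i)) [∀ i, IsProbabilityMeasure (P i)]
    (Ωr : Type*) [MeasurableSpace Ωr]
    (Pr : Measure Ωr) [IsProbabilityMeasure Pr]
    (X : ∀ i, Ω i → ℝ) (hX : ∀ i, Measurable (X i)) (hX_nonneg : ∀ i ω, 0 ≤ X i ω)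
    (Xr : Ωr → ℝ) (hXr : Measurable Xr)
    (E : Type*) [MeasurableSpace E]
    (G : Ωr → ℝ → E) (hG : Measurable fun y : Ωr × ℝ => G y.1 y.2)
    (B : Set E) (hB : MeasurableSet B) :
    ((Measure.pi P).prod (Pr.prod (expMeasure p)))[|
        {z : (∀ i, Ω i) × (Ωr × ℝ) |
          (∑ i, X i (z.1 i)) < z.2.2 ∧ z.2.2 ≤ (∑ i, X i (z.1 i)) + Xr z.2.1}]
      {z : (∀ i, Ω i) × (Ωr × ℝ) | G z.2.1 (z.2.2 - ∑ i, X i (z.1 i)) ∈ B}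
    = (Pr.prod (expMeasure p))[|{y : Ωr × ℝ | y.2 ≤ Xr y.1}]
        {y : Ωr × ℝ | G y.1 y.2 ∈ B} := by
  set S : (∀ i, Ω i) → ℝ := fun ω => ∑ i, X i (ω i)
  have hS : Measurable S := by fun_prop
  have hS_nonneg : ∀ ω, 0 ≤ S ω := fun ω => Finset.sum_nonneg fun i _ => hX_nonneg i _
  have hA : {z : (∀ i, Ω i) × (Ωr × ℝ) | S z.1 < z.2.2 ∧ z.2.2 ≤ S z.1 + Xr z.2.1}
      = {z | S z.1 < z.2.2} ∩ (fun z => (z.2.1, z.2.2 - S z.1)) ⁻¹' {y | y.2 ≤ Xr y.1} := by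
    ext z
    simp only [mem_ofPred_eq, mem_inter_iff, mem_preimage, sub_le_iff_le_add']
  rw [hA]
  exact cond_inter_preimage_eq_cond_of_map_restrict_eq_smul
    (measurableSet_lt (by fun_prop) (by fun_prop)) (by fun_prop)
    (lintegral_ofReal_exp_ne_zero (by fun_prop))
    (lintegral_ofReal_exp_ne_top fun ω => neg_nonpos.2 (mul_nonneg hp.le (hS_nonneg ω)))
    (map_overshoot_restrict_prod_expMeasure _ _ hS hS_nonneg)
    (measurableSet_le (by fun_prop) (by fun_prop)) (hG hB)

/-- The marginal statement (n3.26) of Lemma 4.2 of the paper.  With `r ≥ 2` probability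
spaces (the first `r-1` indexed by `Fin (r-1)`, the `r`-th being `Ωr`), nonnegative
measurable `X_i` with `P_r(X_r > 0) > 0`, measurable `G : Ω_r × [0,∞) → E`, measurable
`B ⊆ E`, `S(ω) = ∑_{i=1}^{r-1} X_i(ω_i)`, `μ_p` the exponential distribution of rate
`p > 0`, and `Q = P_1 ⊗ ⋯ ⊗ P_r ⊗ μ_p`:
`Q(G(ω_r, ℓ - S(ω)) ∈ B │ S(ω) < ℓ ≤ S(ω) + X_r(ω_r))
  = (P_r ⊗ μ_p)(G(ω_r, ℓ_r) ∈ B │ ℓ_r ≤ X_r(ω_r))`. -/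
theorem cond_rebirth_exponential_marginal
    (p : ℝ) (hp : 0 < p)
    (r : ℕ) (hr : 2 ≤ r)
    (Ω : Fin (r - 1) → Type*) [∀ i, MeasurableSpace (Ω i)]
    (P : ∀ i, Measure (Ω i)) [∀ i, IsProbabilityMeasure (P i)]
    (Ωr : Type*) [MeasurableSpace Ωr]
    (Pr : Measure Ωr) [IsProbabilityMeasure Pr]
    (X : ∀ i, Ω i → ℝ) (hX : ∀ i, Measurable (X i)) (hX_nonneg : ∀ i ω, 0 ≤ X i ω)
    (Xr : Ωr → ℝ) (hXr : Measurable Xr) (hXr_nonneg : ∀ ω, 0 ≤ Xr ω)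
    (hXr_pos : 0 < Pr {ω | 0 < Xr ω})
    (E : Type*) [MeasurableSpace E]
    (G : Ωr → ℝ → E) (hG : Measurable fun y : Ωr × ℝ => G y.1 y.2)
    (B : Set E) (hB : MeasurableSet B) :
    ((Measure.pi P).prod (Pr.prod (expMeasure p)))[|
        {z : (∀ i, Ω i) × (Ωr × ℝ) |
          (∑ i, X i (z.1 i)) < z.2.2 ∧ z.2.2 ≤ (∑ i, X i (z.1 i)) + Xr z.2.1}]
      {z : (∀ i, Ω i) × (Ωr × ℝ) | G z.2.1 (z.2.2 - ∑ i, X i (z.1 i)) ∈ B}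
    = (Pr.prod (expMeasure p))[|{y : Ωr × ℝ | y.2 ≤ Xr y.1}]
        {y : Ωr × ℝ | G y.1 y.2 ∈ B} :=
  cond_rebirth_exponential_marginal_general p hp r Ω P Ωr Pr X hX hX_nonneg Xr hXr E G hG B hB
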